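/- arXiv:2402.06631 — 3 statements merged into one kernel-verified Lean document; each statement's English description precedes it below -/
import Mathlib

section
/- Let X be a hyperbolic normed 𝔹ℂ-module and p_𝔻 a hyperbolic seminorm on X. Then p_𝔻 is continuous if and only if there exists α ∈ 𝔻⁺ such that p_𝔻(x) ≤ α ‖x‖_𝔻 for all x ∈ X. -/
noncomputable section

/-- Bicomplex numbers 𝔹ℂ in idempotent coordinates: Z = e₁z₁ + e₂z₂ ↔ (z₁, z₂). -/
abbrev BC := ℂ × ℂ

/-- Hyperbolic numbers 𝔻 in idempotent coordinates: α = α₁e₁ + α₂e₂ ↔ (α₁, α₂). -/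
abbrev Hyp := ℝ × ℝ

/-- Positive hyperbolic numbers 𝔻⁺. -/
def Dpos : Set Hyp := {a | 0 ≤ a.1 ∧ 0 ≤ a.2}

/-- The partial order α ≤ β iff β - α ∈ 𝔻⁺. -/
def dle (a b : Hyp) : Prop := b - a ∈ Dpos

/-- The hyperbolic-valued norm |Z|_k = e₁|z₁| + e₂|z₂| of a bicomplex number. -/
def knorm (z : BC) : Hyp := (‖z.1‖, ‖z.2‖)

/-- The Euclidean modulus of a hyperbolic number α = β₁ + kβ₂, √(β₁² + β₂²),
expressed in idempotent coordinates. -/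
def emod (d : Hyp) : ℝ := Real.sqrt ((d.1 ^ 2 + d.2 ^ 2) / 2)

/-- A hyperbolic-valued norm on a 𝔹ℂ-module X. -/
structure HNorm (X : Type*) [AddCommGroup X] [Module BC X] where
  toFun : X → Hyp
  pos : ∀ x, toFun x ∈ Dpos
  eq_zero_iff : ∀ x, toFun x = 0 ↔ x = 0
  hsmul : ∀ (μ : BC) (x : X), toFun (μ • x) = knorm μ * toFun x
  triangle : ∀ x y, dle (toFun (x + y)) (toFun x + toFun y)

/-- A hyperbolic seminorm on a 𝔹ℂ-module X. -/
structure HSeminorm (X : Type*) [AddCommGroup X] [Module BC X] where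
  toFun : X → Hyp
  pos : ∀ x, toFun x ∈ Dpos
  hsmul : ∀ (μ : BC) (x : X), toFun (μ • x) = knorm μ * toFun x
  triangle : ∀ x y, dle (toFun (x + y)) (toFun x + toFun y)

variable {X : Type*} [AddCommGroup X] [Module BC X]

/-- The real-valued distance induced by a hyperbolic norm. -/
def HNorm.dist (N : HNorm X) (x y : X) : ℝ := emod (N.toFun (x - y))

/-- Convergence of a sequence with respect to a hyperbolic norm. -/
def TendstoH (N : HNorm X) (u : ℕ → X) (l : X) : Prop :=
  ∀ ε > (0 : ℝ), ∃ n₀, ∀ n ≥ n₀, N.dist (u n) l < ε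

/-- Cauchy sequences with respect to a hyperbolic norm. -/
def CauchyH (N : HNorm X) (u : ℕ → X) : Prop :=
  ∀ ε > (0 : ℝ), ∃ n₀, ∀ m ≥ n₀, ∀ n ≥ n₀, N.dist (u m) (u n) < ε

/-- X is an F-𝔹ℂ module: every Cauchy sequence converges. -/
def CompleteH (N : HNorm X) : Prop :=
  ∀ u : ℕ → X, CauchyH N u → ∃ l, TendstoH N u l

/-- The series Σ xₖ converges to s in X. -/
def SumToH (N : HNorm X) (x : ℕ → X) (s : X) : Prop :=
  TendstoH N (fun n => ∑ k ∈ Finset.range n, x k) s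

/-- Convergence of a sequence of hyperbolic numbers. -/
def TendstoD (u : ℕ → Hyp) (l : Hyp) : Prop :=
  ∀ ε > (0 : ℝ), ∃ n₀, ∀ n ≥ n₀, emod (u n - l) < ε

/-- The series Σ dₖ of hyperbolic numbers converges to L. -/
def SumToD (d : ℕ → Hyp) (L : Hyp) : Prop :=
  TendstoD (fun n => ∑ k ∈ Finset.range n, d k) L

/-- Open sets in the topology induced by a hyperbolic norm. -/
def IsOpenH (N : HNorm X) (U : Set X) : Prop :=
  ∀ x ∈ U, ∃ ε > (0 : ℝ), ∀ y, N.dist y x < ε → y ∈ U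

/-- Dense sets in the topology induced by a hyperbolic norm. -/
def DenseH (N : HNorm X) (U : Set X) : Prop :=
  ∀ x : X, ∀ ε > (0 : ℝ), ∃ y ∈ U, N.dist y x < ε

/-- The closure of a set in the topology induced by a hyperbolic norm. -/
def ClosureH (N : HNorm X) (S : Set X) : Set X :=
  {x | ∀ ε > (0 : ℝ), ∃ y ∈ S, N.dist y x < ε}

/-- Continuity of a 𝔻-valued map on X (w.r.t. the hyperbolic-norm topology on X and
the Euclidean topology on 𝔻). -/
def ContinuousHD (N : HNorm X) (p : X → Hyp) : Prop :=
  ∀ x : X, ∀ ε > (0 : ℝ), ∃ δ > (0 : ℝ), ∀ y, N.dist y x < δ → emod (p y - p x) < ε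

/-- A hyperbolic seminorm is countably subadditive if whenever Σ xₖ converges to x in X and
Σ p(xₖ) converges to L in 𝔻, we have p(x) ≤ L. -/
def CountablySubadditive (N : HNorm X) (p : HSeminorm X) : Prop :=
  ∀ (x : ℕ → X) (s : X) (L : Hyp),
    SumToH N x s → SumToD (fun k => p.toFun (x k)) L → dle (p.toFun s) L

section Maps

variable {Y : Type*} [AddCommGroup Y] [Module BC Y]

/-- 𝔹ℂ-linearity of a map between 𝔹ℂ-modules. -/
def IsBCLinear (T : X → Y) : Prop :=
  (∀ x y, T (x + y) = T x + T y) ∧ ∀ (μ : BC) (x : X), T (μ • x) = μ • T x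

/-- Continuity of a map between hyperbolic normed modules. -/
def ContinuousMapH (NX : HNorm X) (NY : HNorm Y) (T : X → Y) : Prop :=
  ∀ x : X, ∀ ε > (0 : ℝ), ∃ δ > (0 : ℝ), ∀ y, NX.dist y x < δ → NY.dist (T y) (T x) < ε

/-- The graph of T is closed: xₙ → x and Txₙ → y imply Tx = y. -/
def ClosedGraphH (NX : HNorm X) (NY : HNorm Y) (T : X → Y) : Prop :=
  ∀ (u : ℕ → X) (x : X) (y : Y),
    TendstoH NX u x → TendstoH NY (fun n => T (u n)) y → T x = y

/-- T is an open map: images of open sets are open. -/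
def IsOpenMapH (NX : HNorm X) (NY : HNorm Y) (T : X → Y) : Prop :=
  ∀ U : Set X, IsOpenH NX U → IsOpenH NY (T '' U)

end Maps

lemma emod_mono {a b : Hyp} (h1 : |a.1| ≤ b.1) (h2 : |a.2| ≤ b.2) : emod a ≤ emod b := by
  apply Real.sqrt_le_sqrt
  have e1 : a.1 ^ 2 ≤ b.1 ^ 2 := by
    calc a.1 ^ 2 = |a.1| ^ 2 := (sq_abs a.1).symm
    _ ≤ b.1 ^ 2 := pow_le_pow_left₀ (abs_nonneg _) h1 2
  have e2 : a.2 ^ 2 ≤ b.2 ^ 2 := by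
    calc a.2 ^ 2 = |a.2| ^ 2 := (sq_abs a.2).symm
    _ ≤ b.2 ^ 2 := pow_le_pow_left₀ (abs_nonneg _) h2 2
  linarith

lemma emod_smul (M : ℝ) (hM : 0 ≤ M) (d : Hyp) :
    emod (M * d.1, M * d.2) = M * emod d := by
  unfold emod
  have h : ((M * d.1) ^ 2 + (M * d.2) ^ 2) / 2 = M ^ 2 * ((d.1 ^ 2 + d.2 ^ 2) / 2) := by ring
  rw [h, Real.sqrt_mul (sq_nonneg M), Real.sqrt_sq hM]

lemma scale1 {X : Type*} [AddCommGroup X] [Module BC X] (q : X → Hyp)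
    (hq : ∀ (μ : BC) (x : X), q (μ • x) = knorm μ * q x)
    (t : ℝ) (ht : 0 ≤ t) (x : X) :
    q ((((t : ℂ), (0 : ℂ)) : BC) • x) = (t * (q x).1, 0) := by
  rw [hq]
  refine Prod.ext ?_ ?_
  · simp [knorm, Complex.norm_real, abs_of_nonneg ht]
  · simp [knorm]

lemma scale2 {X : Type*} [AddCommGroup X] [Module BC X] (q : X → Hyp)
    (hq : ∀ (μ : BC) (x : X), q (μ • x) = knorm μ * q x)
    (t : ℝ) (ht : 0 ≤ t) (x : X) :
    q ((((0 : ℂ), (t : ℂ)) : BC) • x) = (0, t * (q x).2) := by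
  rw [hq]
  refine Prod.ext ?_ ?_
  · simp [knorm]
  · simp [knorm, Complex.norm_real, abs_of_nonneg ht]

/-- A hyperbolic seminorm is continuous iff it is dominated by a hyperbolic multiple
of the norm. -/
theorem seminorm_continuous_iff_bounded {X : Type*} [AddCommGroup X] [Module BC X]
    (N : HNorm X) (p : HSeminorm X) :
    ContinuousHD N p.toFun ↔
      ∃ α ∈ Dpos, ∀ x : X, dle (p.toFun x) (α * N.toFun x) := by
  constructor
  · intro hc
    obtain ⟨δ, hδ, h⟩ := hc 0 1 one_pos
    have hp0 : p.toFun 0 = 0 := by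
      have h0 := p.hsmul 0 0
      rw [smul_zero] at h0
      have hk : knorm (0 : BC) = 0 := by simp [knorm, Prod.ext_iff]
      rw [hk, zero_mul] at h0
      exact h0
    have key : ∀ y : X, emod (N.toFun y) < δ →
        (p.toFun y).1 ≤ Real.sqrt 2 ∧ (p.toFun y).2 ≤ Real.sqrt 2 := by
      intro y hy
      have hd := h y (by simpa [HNorm.dist, sub_zero] using hy)
      rw [hp0, sub_zero] at hd
      have hpos := p.pos y
      have hsum : ((p.toFun y).1 ^ 2 + (p.toFun y).2 ^ 2) / 2 < 1 ^ 2 :=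
        (Real.sqrt_lt' one_pos).mp hd
      have hs2 : Real.sqrt 2 ^ 2 = 2 := Real.sq_sqrt (by norm_num)
      have hs2n : 0 ≤ Real.sqrt 2 := Real.sqrt_nonneg 2
      constructor
      · nlinarith [hpos.1, hpos.2, sq_nonneg (p.toFun y).2,
          sq_nonneg ((p.toFun y).1 - Real.sqrt 2), sq_nonneg ((p.toFun y).1 + Real.sqrt 2)]
      · nlinarith [hpos.1, hpos.2, sq_nonneg (p.toFun y).1,
          sq_nonneg ((p.toFun y).2 - Real.sqrt 2), sq_nonneg ((p.toFun y).2 + Real.sqrt 2)]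
    set C := 2 * Real.sqrt 2 / δ with hCdef
    have hsq2 : 0 < Real.sqrt 2 := Real.sqrt_pos.mpr (by norm_num)
    have hC0 : 0 ≤ C := by positivity
    refine ⟨(C, C), ⟨hC0, hC0⟩, ?_⟩
    intro x
    have hN := N.pos x
    have hb1 : (p.toFun x).1 ≤ C * (N.toFun x).1 := by
      rcases eq_or_lt_of_le hN.1 with h0 | h0
      · rw [← h0, mul_zero]
        by_contra hlt
        push_neg at hlt
        set t := (Real.sqrt 2 + 1) / (p.toFun x).1 with htdef
        have ht : 0 ≤ t := by positivity
        have hNs := scale1 N.toFun N.hsmul t ht x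
        have hsmall : emod (N.toFun ((((t : ℂ), (0 : ℂ)) : BC) • x)) < δ := by
          rw [hNs, ← h0, mul_zero]
          simpa [emod] using hδ
        have hk := (key _ hsmall).1
        rw [scale1 p.toFun p.hsmul t ht x] at hk
        simp only at hk
        have heq : t * (p.toFun x).1 = Real.sqrt 2 + 1 :=
          div_mul_cancel₀ _ (ne_of_gt hlt)
        rw [heq] at hk
        linarith
      · set t := δ / (2 * (N.toFun x).1) with htdef
        have ht : 0 < t := by positivity
        have hNs := scale1 N.toFun N.hsmul t ht.le x
        have htN : t * (N.toFun x).1 = δ / 2 := by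
          rw [htdef]; field_simp
        have hsmall : emod (N.toFun ((((t : ℂ), (0 : ℂ)) : BC) • x)) < δ := by
          rw [hNs, htN]
          have : emod (δ / 2, (0 : ℝ)) ≤ δ / 2 := by
            unfold emod
            calc Real.sqrt (((δ / 2) ^ 2 + 0 ^ 2) / 2) ≤ Real.sqrt ((δ / 2) ^ 2) := by
                  apply Real.sqrt_le_sqrt; nlinarith
            _ = δ / 2 := Real.sqrt_sq (by positivity)
          linarith
        have hk := (key _ hsmall).1
        rw [scale1 p.toFun p.hsmul t ht.le x] at hk
        simp only at hk
        have : (p.toFun x).1 ≤ Real.sqrt 2 / t := by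
          rw [le_div_iff₀ ht]; linarith [hk]
        have hdiv : Real.sqrt 2 / t = C * (N.toFun x).1 := by
          rw [htdef, hCdef]
          field_simp
        linarith [hdiv ▸ this]
    have hb2 : (p.toFun x).2 ≤ C * (N.toFun x).2 := by
      rcases eq_or_lt_of_le hN.2 with h0 | h0
      · rw [← h0, mul_zero]
        by_contra hlt
        push_neg at hlt
        set t := (Real.sqrt 2 + 1) / (p.toFun x).2 with htdef
        have ht : 0 ≤ t := by positivity
        have hNs := scale2 N.toFun N.hsmul t ht x
        have hsmall : emod (N.toFun ((((0 : ℂ), (t : ℂ)) : BC) • x)) < δ := by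
          rw [hNs, ← h0, mul_zero]
          simpa [emod] using hδ
        have hk := (key _ hsmall).2
        rw [scale2 p.toFun p.hsmul t ht x] at hk
        simp only at hk
        have heq : t * (p.toFun x).2 = Real.sqrt 2 + 1 :=
          div_mul_cancel₀ _ (ne_of_gt hlt)
        rw [heq] at hk
        linarith
      · set t := δ / (2 * (N.toFun x).2) with htdef
        have ht : 0 < t := by positivity
        have hNs := scale2 N.toFun N.hsmul t ht.le x
        have htN : t * (N.toFun x).2 = δ / 2 := by
          rw [htdef]; field_simp
        have hsmall : emod (N.toFun ((((0 : ℂ), (t : ℂ)) : BC) • x)) < δ := by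
          rw [hNs, htN]
          have : emod ((0 : ℝ), δ / 2) ≤ δ / 2 := by
            unfold emod
            calc Real.sqrt ((0 ^ 2 + (δ / 2) ^ 2) / 2) ≤ Real.sqrt ((δ / 2) ^ 2) := by
                  apply Real.sqrt_le_sqrt; nlinarith
            _ = δ / 2 := Real.sqrt_sq (by positivity)
          linarith
        have hk := (key _ hsmall).2
        rw [scale2 p.toFun p.hsmul t ht.le x] at hk
        simp only at hk
        have : (p.toFun x).2 ≤ Real.sqrt 2 / t := by
          rw [le_div_iff₀ ht]; linarith [hk]
        have hdiv : Real.sqrt 2 / t = C * (N.toFun x).2 := by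
          rw [htdef, hCdef]
          field_simp
        linarith [hdiv ▸ this]
    refine ⟨?_, ?_⟩
    · simp only [Prod.fst_sub, Prod.fst_mul]
      linarith
    · simp only [Prod.snd_sub, Prod.snd_mul]
      linarith
  · rintro ⟨α, hα, hdom⟩ x ε hε
    set M := max α.1 α.2 with hM
    have hM0 : 0 ≤ M := le_trans hα.1 (le_max_left _ _)
    refine ⟨ε / (M + 1), by positivity, ?_⟩
    intro y hy
    have hneg : p.toFun (x - y) = p.toFun (y - x) := by
      have hs := p.hsmul (-1 : BC) (y - x)
      have h1 : ((-1 : BC) • (y - x)) = x - y := by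
        rw [neg_one_smul]; abel
      have hk : knorm (-1 : BC) = 1 := by
        simp [knorm, Prod.ext_iff]
      rw [h1, hk, one_mul] at hs
      exact hs
    have tri1 := p.triangle (y - x) x
    rw [sub_add_cancel] at tri1
    have tri2 := p.triangle (x - y) y
    rw [sub_add_cancel] at tri2
    rw [hneg] at tri2
    obtain ⟨t11, t12⟩ := tri1
    obtain ⟨t21, t22⟩ := tri2
    simp only [Prod.fst_sub, Prod.fst_add, Prod.snd_sub, Prod.snd_add] at t11 t12 t21 t22
    have hpyx := p.pos (y - x)
    have hNyx := N.pos (y - x)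
    obtain ⟨d1, d2⟩ := hdom (y - x)
    simp only [Prod.fst_sub, Prod.fst_mul, Prod.snd_sub, Prod.snd_mul] at d1 d2
    have b1 : |(p.toFun y - p.toFun x).1| ≤ M * (N.toFun (y - x)).1 := by
      rw [abs_le]
      constructor
      · simp only [Prod.fst_sub]
        nlinarith [le_max_left α.1 α.2, hNyx.1]
      · simp only [Prod.fst_sub]
        nlinarith [le_max_left α.1 α.2, hNyx.1]
    have b2 : |(p.toFun y - p.toFun x).2| ≤ M * (N.toFun (y - x)).2 := by
      rw [abs_le]
      constructor
      · simp only [Prod.snd_sub]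
        nlinarith [le_max_right α.1 α.2, hNyx.2]
      · simp only [Prod.snd_sub]
        nlinarith [le_max_right α.1 α.2, hNyx.2]
    have step1 : emod (p.toFun y - p.toFun x) ≤ M * emod (N.toFun (y - x)) := by
      calc emod (p.toFun y - p.toFun x)
          ≤ emod (M * (N.toFun (y - x)).1, M * (N.toFun (y - x)).2) := emod_mono b1 b2
        _ = M * emod (N.toFun (y - x)) := emod_smul M hM0 _
    have hy' : emod (N.toFun (y - x)) < ε / (M + 1) := hy
    have : M * emod (N.toFun (y - x)) ≤ M * (ε / (M + 1)) :=
      mul_le_mul_of_nonneg_left hy'.le hM0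
    have hlt : M * (ε / (M + 1)) < ε := by
      rw [mul_div_assoc']
      rw [div_lt_iff₀ (by linarith)]
      nlinarith
    calc emod (p.toFun y - p.toFun x) ≤ M * emod (N.toFun (y - x)) := step1
      _ ≤ M * (ε / (M + 1)) := this
      _ < ε := hlt
end
end

section
/- Uniform boundedness principle for families of hyperbolic seminorms: Let X be an F-𝔹ℂ module and P₀ a set of continuous hyperbolic seminorms on X such that for each x ∈ X the set {p_𝔻(x) : p_𝔻 ∈ P₀} is 𝔻-bounded. Then there exists δ ∈ 𝔻⁺ such that p_𝔻(x) ≤ δ‖x‖_𝔻 for all x ∈ X and all p_𝔻 ∈ P₀. -/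
noncomputable section

variable {X : Type*} [AddCommGroup X] [Module BC X]

set_option linter.unusedSectionVars false

namespace UBPaux

/-! ### Facts about `emod` -/

def toC (a : Hyp) : ℂ := ⟨a.1, a.2⟩

lemma emod_eq (a : Hyp) : emod a = ‖toC a‖ / Real.sqrt 2 := by
  rw [emod, Complex.norm_def, Complex.normSq_mk,
    ← Real.sqrt_div (x := (toC a).re * (toC a).re + (toC a).im * (toC a).im)
      (add_nonneg (mul_self_nonneg _) (mul_self_nonneg _))]
  show Real.sqrt _ = Real.sqrt ((a.1 * a.1 + a.2 * a.2) / 2)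
  ring_nf

lemma toC_add (a b : Hyp) : toC (a + b) = toC a + toC b := by
  simp only [toC]; apply Complex.ext <;> simp

lemma toC_sub (a b : Hyp) : toC (a - b) = toC a - toC b := by
  simp only [toC]; apply Complex.ext <;> simp

lemma sqrt2_pos : (0:ℝ) < Real.sqrt 2 := Real.sqrt_pos.mpr (by norm_num)

lemma emod_nonneg (a : Hyp) : 0 ≤ emod a := Real.sqrt_nonneg _

lemma emod_zero : emod 0 = 0 := by simp [emod]

lemma emod_eq_zero {a : Hyp} (h : emod a = 0) : a = 0 := by
  rw [emod_eq] at h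
  field_simp at h
  have : toC a = 0 := by simpa using h
  have h1 : a.1 = 0 := congrArg Complex.re this
  have h2 : a.2 = 0 := congrArg Complex.im this
  exact Prod.ext h1 h2

lemma emod_add_le (a b : Hyp) : emod (a + b) ≤ emod a + emod b := by
  rw [emod_eq, emod_eq, emod_eq, toC_add, ← add_div, div_le_div_iff_of_pos_right sqrt2_pos]
  exact norm_add_le _ _

lemma abs_emod_sub_le (a b : Hyp) : |emod a - emod b| ≤ emod (a - b) := by
  rw [emod_eq, emod_eq, emod_eq, toC_sub, ← sub_div, abs_div,
    abs_of_pos sqrt2_pos, div_le_div_iff_of_pos_right sqrt2_pos]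
  exact abs_norm_sub_norm_le _ _

lemma emod_mono {a b : Hyp} (ha : a ∈ Dpos) (h : dle a b) : emod a ≤ emod b := by
  obtain ⟨h1, h2⟩ := ha
  obtain ⟨g1, g2⟩ := h
  simp only [Prod.fst_sub, Prod.snd_sub, sub_nonneg] at g1 g2
  apply Real.sqrt_le_sqrt
  have : a.1 ^ 2 ≤ b.1 ^ 2 := by nlinarith
  have : a.2 ^ 2 ≤ b.2 ^ 2 := by nlinarith
  linarith

lemma emod_scale (t : ℝ) (ht : 0 ≤ t) (a : Hyp) : emod (t * a.1, t * a.2) = t * emod a := by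
  rw [emod, emod]
  simp only
  rw [show (t * a.1) ^ 2 + (t * a.2) ^ 2 = t ^ 2 * (a.1 ^ 2 + a.2 ^ 2) by ring, mul_div_assoc,
    Real.sqrt_mul (sq_nonneg t), Real.sqrt_sq ht]

lemma emod_pair_fst (a : ℝ) (ha : 0 ≤ a) : emod (a, 0) = a / Real.sqrt 2 := by
  rw [emod]
  simp only
  rw [show (a ^ 2 + (0:ℝ) ^ 2) / 2 = a ^ 2 / 2 by ring, Real.sqrt_div (sq_nonneg a),
    Real.sqrt_sq ha]

lemma emod_pair_snd (a : ℝ) (ha : 0 ≤ a) : emod (0, a) = a / Real.sqrt 2 := by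
  rw [emod]
  simp only
  rw [show ((0:ℝ) ^ 2 + a ^ 2) / 2 = a ^ 2 / 2 by ring, Real.sqrt_div (sq_nonneg a),
    Real.sqrt_sq ha]

/-! ### Seminorm-like functions -/

variable {X : Type*} [AddCommGroup X] [Module BC X]

/-- Real scalar multiplication through the diagonal embedding ℝ → 𝔹ℂ. -/
def rS (t : ℝ) (x : X) : X := ((((t:ℂ), (t:ℂ)) : BC)) • x

lemma knorm_real (t : ℝ) : knorm (((t:ℂ), (t:ℂ)) : BC) = ((|t|, |t|) : Hyp) := by
  simp [knorm]

section SN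

variable (p : X → Hyp) (hpos : ∀ x, p x ∈ Dpos)
  (hsm : ∀ (μ : BC) (x : X), p (μ • x) = knorm μ * p x)
  (htri : ∀ x y, dle (p (x + y)) (p x + p y))

include hsm

lemma p_zero : p 0 = 0 := by
  have := hsm 0 0
  rw [zero_smul] at this
  rw [this]
  have : knorm (0 : BC) = 0 := by simp [knorm]
  rw [this, zero_mul]

lemma p_neg (x : X) : p (-x) = p x := by
  have := hsm (-1) x
  rw [neg_one_smul] at this
  rw [this]
  have : knorm ((-1 : BC)) = 1 := by
    have h1 : ((-1 : BC)).1 = (-1 : ℂ) := rfl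
    have h2 : ((-1 : BC)).2 = (-1 : ℂ) := rfl
    simp [knorm, h1, h2]
  rw [this, one_mul]

lemma p_real_smul (t : ℝ) (ht : 0 ≤ t) (x : X) :
    emod (p (rS t x)) = t * emod (p x) := by
  rw [rS, hsm, knorm_real]
  have : ((|t|, |t|) : Hyp) * p x = (t * (p x).1, t * (p x).2) := by
    rw [abs_of_nonneg ht]; rfl
  rw [this, emod_scale t ht]

include hpos htri

lemma Q_add (x y : X) : emod (p (x + y)) ≤ emod (p x) + emod (p y) :=
  le_trans (emod_mono (hpos _) (htri x y)) (emod_add_le _ _)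

lemma Q_sub (x y : X) : emod (p (x - y)) ≤ emod (p x) + emod (p y) := by
  have := Q_add p hpos hsm htri x (-y)
  rw [← sub_eq_add_neg] at this
  rw [p_neg p hsm] at this
  exact this

lemma Q_sub_le (x y : X) : emod (p x) ≤ emod (p (x - y)) + emod (p y) := by
  have h := Q_add p hpos hsm htri (x - y) y
  rw [sub_add_cancel] at h
  exact h

end SN


/-! ### Scalar uniform boundedness -/

lemma scalar_ubp (N : HNorm X) (hC : CompleteH N) (P₀ : Set (HSeminorm X))
    (hcont : ∀ p ∈ P₀, ContinuousHD N p.toFun)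
    (hbdd : ∀ x : X, ∃ M ∈ Dpos, ∀ p ∈ P₀, dle (p.toFun x) M) :
    ∃ C : ℝ, 0 ≤ C ∧ ∀ p ∈ P₀, ∀ x : X, emod (p.toFun x) ≤ C * emod (N.toFun x) := by
  classical
  set n : X → ℝ := fun x => emod (N.toFun x) with hn
  have hdist : ∀ a b : X, N.dist a b = n (a - b) := fun a b => by rw [hn]; rfl
  have hn0 : n 0 = 0 := by rw [hn]; simp only; rw [p_zero N.toFun N.hsmul, emod_zero]
  have hnz : ∀ {y : X}, n y = 0 → y = 0 := fun {y} h => (N.eq_zero_iff y).mp (emod_eq_zero h)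
  have hnsmul : ∀ (t : ℝ), 0 ≤ t → ∀ y : X, n (rS t y) = t * n y := fun t ht y => by
    rw [hn]; simp only; exact p_real_smul N.toFun N.hsmul t ht y
  have hnadd : ∀ a b : X, n (a + b) ≤ n a + n b := fun a b => by
    rw [hn]; simp only; exact Q_add N.toFun N.pos N.hsmul N.triangle a b
  have hnneg : ∀ w : X, n (-w) = n w := fun w => by
    rw [hn]; simp only; rw [p_neg N.toFun N.hsmul]
  have hnsym : ∀ a b : X, n (a - b) = n (b - a) := fun a b => by
    rw [show a - b = -(b - a) from (neg_sub b a).symm, hnneg]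
  have hnnn : ∀ y : X, 0 ≤ n y := fun y => by rw [hn]; exact emod_nonneg _
  -- Step A : each continuous seminorm is bounded
  have stepA : ∀ p ∈ P₀, ∃ C > (0:ℝ), ∀ y, emod (p.toFun y) ≤ C * n y := by
    intro p hp
    obtain ⟨δ, hδ, hδ1⟩ := hcont p hp 0 1 one_pos
    refine ⟨2 / δ, by positivity, fun y => ?_⟩
    rcases eq_or_ne (n y) 0 with h0 | h0
    · have hy0 : y = 0 := hnz h0
      subst hy0
      rw [h0, p_zero p.toFun p.hsmul, emod_zero, mul_zero]
    · have hny : 0 < n y := lt_of_le_of_ne (hnnn y) (Ne.symm h0)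
      set t := δ / (2 * n y) with htdef
      have ht : 0 < t := by positivity
      have h1 : n (rS t y) = δ / 2 := by
        rw [hnsmul t ht.le y, htdef]; field_simp
      have hlt : N.dist (rS t y) 0 < δ := by
        rw [hdist, sub_zero, h1]; linarith
      have h2 := hδ1 (rS t y) hlt
      rw [p_zero p.toFun p.hsmul, sub_zero,
        p_real_smul p.toFun p.hsmul t ht.le y] at h2
      have h3 : emod (p.toFun y) < 1 / t := by
        rw [lt_div_iff₀ ht]; linarith [mul_comm t (emod (p.toFun y))]
      have h4 : 1 / t = 2 / δ * n y := by rw [htdef]; field_simp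
      rw [h4] at h3
      exact h3.le
  -- operator "norm"
  set S : HSeminorm X → Set ℝ := fun p => {r | ∃ y, n y ≤ 1 ∧ r = emod (p.toFun y)} with hS
  have hSne : ∀ p, (S p).Nonempty := fun p => ⟨emod (p.toFun 0), 0, by rw [hn0]; norm_num, rfl⟩
  have hSbdd : ∀ p ∈ P₀, BddAbove (S p) := by
    intro p hp
    obtain ⟨C, hC1, hCb⟩ := stepA p hp
    refine ⟨C, fun r hr => ?_⟩
    obtain ⟨y, hy, rfl⟩ := hr
    calc emod (p.toFun y) ≤ C * n y := hCb y
      _ ≤ C * 1 := by nlinarith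
      _ = C := mul_one C
  set opn : HSeminorm X → ℝ := fun p => sSup (S p) with hopn
  have hopn_nonneg : ∀ p ∈ P₀, 0 ≤ opn p := by
    intro p hp
    have h0 : (0:ℝ) ∈ S p := ⟨0, by rw [hn0]; norm_num, by rw [p_zero p.toFun p.hsmul, emod_zero]⟩
    exact le_csSup (hSbdd p hp) h0
  have hopn_bound : ∀ p ∈ P₀, ∀ y, emod (p.toFun y) ≤ opn p * n y := by
    intro p hp y
    rcases eq_or_ne (n y) 0 with h0 | h0
    · have hy0 : y = 0 := hnz h0
      subst hy0
      rw [h0, mul_zero, p_zero p.toFun p.hsmul, emod_zero]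
    · have hny : 0 < n y := lt_of_le_of_ne (hnnn y) (Ne.symm h0)
      have hmem : emod (p.toFun (rS (1 / n y) y)) ∈ S p := by
        refine ⟨rS (1 / n y) y, ?_, rfl⟩
        rw [hnsmul (1 / n y) (by positivity) y]
        field_simp
        exact le_refl 1
      have hle : emod (p.toFun (rS (1 / n y) y)) ≤ opn p := le_csSup (hSbdd p hp) hmem
      rw [p_real_smul p.toFun p.hsmul (1 / n y) (by positivity) y,
        one_div, inv_mul_eq_div, div_le_iff₀ hny] at hle
      linarith [mul_comm (opn p) (n y)]
  -- key geometric lemma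
  have hkey : ∀ p ∈ P₀, ∀ (x : X) (r K : ℝ), 0 < r → K < r * opn p →
      ∃ y, n (y - x) ≤ r ∧ K < emod (p.toFun y) := by
    intro p hp x r K hr hK
    have h1 : K / r < opn p := (div_lt_iff₀ hr).mpr (by linarith [mul_comm r (opn p)])
    obtain ⟨s, hs, hsl⟩ := exists_lt_of_lt_csSup (hSne p) h1
    obtain ⟨z, hz1, rfl⟩ := hs
    set w := rS r z with hw
    have hqw : K < emod (p.toFun w) := by
      rw [hw, p_real_smul p.toFun p.hsmul r hr.le]
      calc K = r * (K / r) := by field_simp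
        _ < r * emod (p.toFun z) := by exact mul_lt_mul_of_pos_left hsl hr
    have hnw : n w ≤ r := by
      rw [hw, hnsmul r hr.le]
      nlinarith
    have hdouble : rS 2 w = w + w := by
      rw [rS]
      have h2 : ((((2:ℝ):ℂ), ((2:ℝ):ℂ)) : BC) = (2 : BC) := by norm_num [Prod.ext_iff]
      rw [h2, two_smul]
    have hsum : emod (p.toFun w) + emod (p.toFun w) ≤
        emod (p.toFun (x + w)) + emod (p.toFun (x - w)) := by
      have h2 : emod (p.toFun (rS 2 w)) = 2 * emod (p.toFun w) :=
        p_real_smul p.toFun p.hsmul 2 (by norm_num) w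
      have h3 : rS 2 w = (x + w) - (x - w) := by rw [hdouble]; abel
      have h4 := Q_sub p.toFun p.pos p.hsmul p.triangle (x + w) (x - w)
      rw [← h3, h2] at h4
      linarith
    rcases le_or_gt (emod (p.toFun (x + w))) K with hc | hc
    · refine ⟨x - w, ?_, by linarith⟩
      rw [show x - w - x = -w by abel, hnneg]
      exact hnw
    · refine ⟨x + w, ?_, hc⟩
      rw [add_sub_cancel_left]
      exact hnw
  -- contradiction argument
  by_contra hcon
  push_neg at hcon
  have hbig : ∀ C : ℝ, ∃ p ∈ P₀, C < opn p := by
    intro C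
    obtain ⟨p, hp, xx, hx⟩ := hcon (max C 0) (le_max_right _ _)
    have h0 : n xx ≠ 0 := by
      intro h
      have hx0 : xx = 0 := hnz h
      rw [hx0, p_zero p.toFun p.hsmul, emod_zero] at hx
      rw [hx0] at h
      rw [show emod (N.toFun 0) = n 0 from rfl, hn0, mul_zero] at hx
      exact lt_irrefl 0 hx
    have hnx : 0 < n xx := lt_of_le_of_ne (hnnn xx) (Ne.symm h0)
    have h1 : emod (p.toFun xx) ≤ opn p * n xx := hopn_bound p hp xx
    have h2 : max C 0 * n xx < opn p * n xx := lt_of_lt_of_le hx h1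
    exact ⟨p, hp, lt_of_le_of_lt (le_max_left _ _) ((mul_lt_mul_iff_left₀ hnx).mp h2)⟩
  -- choose a sequence of seminorms with large norms
  have hPex : ∀ k : ℕ, ∃ p, p ∈ P₀ ∧ (4:ℝ)^k < opn p := by
    intro k
    obtain ⟨p, hp, h⟩ := hbig ((4:ℝ)^k)
    exact ⟨p, hp, h⟩
  choose P hPmem hPgt using hPex
  -- recursive construction
  have hstep : ∀ (k : ℕ) (xk : X), ∃ y, n (y - xk) ≤ (1/3:ℝ)^(k+1) ∧
      (2/3) * ((1/3:ℝ)^(k+1) * opn (P (k+1))) < emod ((P (k+1)).toFun y) := by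
    intro k xk
    apply hkey (P (k+1)) (hPmem (k+1)) xk ((1/3:ℝ)^(k+1)) _ (by positivity)
    have hpos4 : (0:ℝ) < opn (P (k+1)) := lt_of_le_of_lt (by positivity) (hPgt (k+1))
    nlinarith [pow_pos (by norm_num : (0:ℝ) < 1/3) (k+1)]
  obtain ⟨x, hx0, hxs⟩ : ∃ x : ℕ → X, x 0 = 0 ∧ ∀ k, n (x (k+1) - x k) ≤ (1/3:ℝ)^(k+1) ∧
      (2/3) * ((1/3:ℝ)^(k+1) * opn (P (k+1))) < emod ((P (k+1)).toFun (x (k+1))) := by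
    refine ⟨fun k => Nat.rec 0 (fun k xk => Classical.choose (hstep k xk)) k, rfl, fun k => ?_⟩
    exact Classical.choose_spec (hstep k _)
  -- Cauchy estimates
  have hgap : ∀ k d : ℕ, n (x (k+d) - x k) ≤ (1/2) * (1/3:ℝ)^k - (1/2) * (1/3:ℝ)^(k+d) := by
    intro k d
    induction d with
    | zero => rw [Nat.add_zero, sub_self, hn0]; simp
    | succ d ih =>
      have h1 : n (x (k+d+1) - x k) ≤ n (x (k+d+1) - x (k+d)) + n (x (k+d) - x k) := by
        rw [show x (k+d+1) - x k = (x (k+d+1) - x (k+d)) + (x (k+d) - x k) by abel]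
        exact hnadd _ _
      have h2 := (hxs (k+d)).1
      have h3 : (1/3:ℝ)^(k+d+1) = (1/3:ℝ)^(k+d) * (1/3) := pow_succ _ _
      rw [show k + (d+1) = k + d + 1 from rfl]
      linarith
  have hgap' : ∀ k m : ℕ, k ≤ m → n (x m - x k) ≤ (1/2) * (1/3:ℝ)^k := by
    intro k m hkm
    obtain ⟨d, rfl⟩ := Nat.exists_eq_add_of_le hkm
    have h1 := hgap k d
    have h2 : (0:ℝ) ≤ (1/2) * (1/3:ℝ)^(k+d) := by positivity
    linarith
  have hcauchy : CauchyH N x := by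
    intro ε hε
    obtain ⟨n₀, hn₀⟩ := exists_pow_lt_of_lt_one hε (by norm_num : (1/3:ℝ) < 1)
    refine ⟨n₀, fun m hm k hk => ?_⟩
    have hb : ∀ a b : ℕ, n₀ ≤ a → a ≤ b → n (x b - x a) < ε := by
      intro a b ha hab
      have h1 := hgap' a b hab
      have h2 : (1/3:ℝ)^a ≤ (1/3:ℝ)^n₀ :=
        pow_le_pow_of_le_one (by norm_num) (by norm_num) ha
      have h3 : (0:ℝ) ≤ (1/3:ℝ)^n₀ := by positivity
      linarith
    rw [hdist]
    rcases le_total m k with h | h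
    · rw [hnsym]; exact hb m k hm h
    · exact hb k m hk h
  obtain ⟨l, hl⟩ := hC x hcauchy
  have htail : ∀ k, n (l - x k) ≤ (1/2) * (1/3:ℝ)^k := by
    intro k
    refine le_of_forall_pos_le_add (fun ε hε => ?_)
    obtain ⟨n₀, hn₀⟩ := hl ε hε
    set m := max n₀ k with hm
    have h1 : N.dist (x m) l < ε := hn₀ m (le_max_left _ _)
    rw [hdist] at h1
    have h2 : n (x m - x k) ≤ (1/2) * (1/3:ℝ)^k := hgap' k m (le_max_right _ _)
    have h3 : n (l - x k) ≤ n (l - x m) + n (x m - x k) := by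
      rw [show l - x k = (l - x m) + (x m - x k) by abel]
      exact hnadd _ _
    have h4 : n (l - x m) = n (x m - l) := hnsym _ _
    linarith
  -- final contradiction
  obtain ⟨M, hM, hMb⟩ := hbdd l
  have hql : ∀ p ∈ P₀, emod (p.toFun l) ≤ emod M := fun p hp => emod_mono (p.pos l) (hMb p hp)
  obtain ⟨k0, hk0⟩ := pow_unbounded_of_one_lt (6 * emod M) (by norm_num : (1:ℝ) < 4/3)
  set j := k0 + 1 with hj
  have hgrow : 6 * emod M < (4/3:ℝ)^j :=
    lt_of_lt_of_le hk0 (pow_le_pow_right₀ (by norm_num) (Nat.le_succ _))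
  have hA := (hxs k0).2
  have hB : emod ((P j).toFun (x j - l)) ≤ opn (P j) * n (x j - l) :=
    hopn_bound (P j) (hPmem j) _
  have hC1 : n (x j - l) ≤ (1/2) * (1/3:ℝ)^j := by rw [hnsym]; exact htail j
  have hD : emod ((P j).toFun (x j)) ≤ emod ((P j).toFun (x j - l)) + emod ((P j).toFun l) :=
    Q_sub_le (P j).toFun (P j).pos (P j).hsmul (P j).triangle (x j) l
  have hopnpos : (0:ℝ) < opn (P j) := lt_of_le_of_lt (by positivity) (hPgt j)
  have hE : emod ((P j).toFun l) ≤ emod M := hql _ (hPmem j)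
  have hr : (0:ℝ) < (1/3:ℝ)^j := by positivity
  have h6 : (1/3:ℝ)^j * (4:ℝ)^j = (4/3:ℝ)^j := by rw [← mul_pow]; norm_num
  have hprod : (4/3:ℝ)^j < (1/3:ℝ)^j * opn (P j) := by
    rw [← h6]
    exact (mul_lt_mul_iff_right₀ hr).mpr (hPgt j)
  have hB' : emod ((P j).toFun (x j - l)) ≤ opn (P j) * ((1/2) * (1/3:ℝ)^j) :=
    le_trans hB (mul_le_mul_of_nonneg_left hC1 hopnpos.le)
  have hEM : 0 ≤ emod M := emod_nonneg M
  nlinarith [hA, hD, hB', hE, hgrow, hprod, hr, hopnpos, hEM]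

end UBPaux

/-- Uniform boundedness principle for families of continuous hyperbolic seminorms on an
F-𝔹ℂ module: pointwise 𝔻-boundedness implies a uniform bound δ‖·‖_𝔻. -/
theorem uniform_boundedness_seminorms {X : Type*} [AddCommGroup X] [Module BC X]
    (N : HNorm X) (hC : CompleteH N) (P₀ : Set (HSeminorm X))
    (hcont : ∀ p ∈ P₀, ContinuousHD N p.toFun)
    (hbdd : ∀ x : X, ∃ M ∈ Dpos, ∀ p ∈ P₀, dle (p.toFun x) M) :
    ∃ δ ∈ Dpos, ∀ p ∈ P₀, ∀ x : X, dle (p.toFun x) (δ * N.toFun x) := by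
  classical
  obtain ⟨C, hC0, hCb⟩ := UBPaux.scalar_ubp N hC P₀ hcont hbdd
  refine ⟨(C, C), ⟨hC0, hC0⟩, fun p hp x => ?_⟩
  have e1smul : ∀ (q : HSeminorm X) (y : X), q.toFun ((((1:ℂ), (0:ℂ)) : BC) • y)
      = ((q.toFun y).1, 0) := by
    intro q y
    rw [q.hsmul]
    have hk : knorm (((1:ℂ), (0:ℂ)) : BC) = ((1, 0) : Hyp) := by simp [knorm]
    rw [hk]
    exact Prod.ext (one_mul _) (zero_mul _)
  have e1smulN : N.toFun ((((1:ℂ), (0:ℂ)) : BC) • x) = ((N.toFun x).1, 0) := by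
    rw [N.hsmul]
    have hk : knorm (((1:ℂ), (0:ℂ)) : BC) = ((1, 0) : Hyp) := by simp [knorm]
    rw [hk]
    exact Prod.ext (one_mul _) (zero_mul _)
  have e2smul : ∀ (q : HSeminorm X) (y : X), q.toFun ((((0:ℂ), (1:ℂ)) : BC) • y)
      = (0, (q.toFun y).2) := by
    intro q y
    rw [q.hsmul]
    have hk : knorm (((0:ℂ), (1:ℂ)) : BC) = ((0, 1) : Hyp) := by simp [knorm]
    rw [hk]
    exact Prod.ext (zero_mul _) (one_mul _)
  have e2smulN : N.toFun ((((0:ℂ), (1:ℂ)) : BC) • x) = (0, (N.toFun x).2) := by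
    rw [N.hsmul]
    have hk : knorm (((0:ℂ), (1:ℂ)) : BC) = ((0, 1) : Hyp) := by simp [knorm]
    rw [hk]
    exact Prod.ext (zero_mul _) (one_mul _)
  have h1 : (p.toFun x).1 ≤ C * (N.toFun x).1 := by
    have h := hCb p hp ((((1:ℂ), (0:ℂ)) : BC) • x)
    rw [e1smul p x, e1smulN, UBPaux.emod_pair_fst _ (p.pos x).1,
      UBPaux.emod_pair_fst _ (N.pos x).1, ← mul_div_assoc,
      div_le_div_iff_of_pos_right UBPaux.sqrt2_pos] at h
    exact h
  have h2 : (p.toFun x).2 ≤ C * (N.toFun x).2 := by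
    have h := hCb p hp ((((0:ℂ), (1:ℂ)) : BC) • x)
    rw [e2smul p x, e2smulN, UBPaux.emod_pair_snd _ (p.pos x).2,
      UBPaux.emod_pair_snd _ (N.pos x).2, ← mul_div_assoc,
      div_le_div_iff_of_pos_right UBPaux.sqrt2_pos] at h
    exact h
  constructor
  · show (0:ℝ) ≤ (((C, C) : Hyp) * N.toFun x - p.toFun x).1
    show (0:ℝ) ≤ C * (N.toFun x).1 - (p.toFun x).1
    linarith
  · show (0:ℝ) ≤ (((C, C) : Hyp) * N.toFun x - p.toFun x).2
    show (0:ℝ) ≤ C * (N.toFun x).2 - (p.toFun x).2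
    linarith
end
end

section
/- Characterization of open linear maps: Let X and Y be hyperbolic normed 𝔹ℂ-modules and T : X → Y a surjective 𝔹ℂ-linear map. Then T is an open map if and only if there exists γ ∈ 𝔻⁺ strictly positive such that for every y ∈ Y there exists x ∈ X with T(x) = y and ‖x‖_𝔻 ≤ γ‖y‖_𝔻. -/
noncomputable section

variable {X : Type*} [AddCommGroup X] [Module BC X]

section OpenMapHelpers

lemma dle_iff' (a b : Hyp) : dle a b ↔ a.1 ≤ b.1 ∧ a.2 ≤ b.2 := by
  simp [dle, Dpos, Prod.sub_def, sub_nonneg]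

lemma emod_eq' (d : Hyp) : emod d = ‖(⟨d.1, d.2⟩ : ℂ)‖ / Real.sqrt 2 := by
  rw [emod, Complex.norm_def, Complex.normSq_mk, eq_div_iff (by positivity),
    ← Real.sqrt_mul (by positivity)]
  ring_nf

lemma emod_add_le (a b : Hyp) : emod (a + b) ≤ emod a + emod b := by
  rw [emod_eq', emod_eq', emod_eq', ← add_div]
  have habs : ‖(⟨(a+b).1, (a+b).2⟩ : ℂ)‖ ≤ ‖(⟨a.1,a.2⟩ : ℂ)‖ + ‖(⟨b.1,b.2⟩ : ℂ)‖ := by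
    have : (⟨(a+b).1, (a+b).2⟩ : ℂ) = ⟨a.1,a.2⟩ + ⟨b.1,b.2⟩ := by
      simp [Complex.ext_iff, Prod.fst_add, Prod.snd_add]
    rw [this]; exact norm_add_le _ _
  gcongr

lemma emod_nonneg (d : Hyp) : 0 ≤ emod d := Real.sqrt_nonneg _

lemma emod_zero' : emod 0 = 0 := by simp [emod]

lemma emod_mono_s17 {a b : Hyp} (ha : a ∈ Dpos) (h : dle a b) : emod a ≤ emod b := by
  obtain ⟨h1, h2⟩ := (dle_iff' a b).1 h
  exact Real.sqrt_le_sqrt (by nlinarith [ha.1, ha.2])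

lemma emod_le_max {d : Hyp} (hd : d ∈ Dpos) : emod d ≤ max d.1 d.2 := by
  have h : (d.1 ^ 2 + d.2 ^ 2) / 2 ≤ (max d.1 d.2) ^ 2 := by
    rcases max_cases d.1 d.2 with ⟨he, h'⟩ | ⟨he, h'⟩ <;> rw [he] <;> nlinarith [hd.1, hd.2]
  calc emod d ≤ Real.sqrt ((max d.1 d.2)^2) := Real.sqrt_le_sqrt h
    _ = _ := Real.sqrt_sq (le_max_of_le_left hd.1)

lemma comp_le_emod {d : Hyp} (hd : d ∈ Dpos) :
    d.1 ≤ Real.sqrt 2 * emod d ∧ d.2 ≤ Real.sqrt 2 * emod d := by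
  have h2 : Real.sqrt 2 * emod d = Real.sqrt (d.1^2 + d.2^2) := by
    rw [emod, ← Real.sqrt_mul (by positivity)]; ring_nf
  constructor
  · rw [h2]
    calc d.1 = Real.sqrt (d.1^2) := (Real.sqrt_sq hd.1).symm
      _ ≤ _ := Real.sqrt_le_sqrt (by nlinarith)
  · rw [h2]
    calc d.2 = Real.sqrt (d.2^2) := (Real.sqrt_sq hd.2).symm
      _ ≤ _ := Real.sqrt_le_sqrt (by nlinarith)

lemma hnorm_zero {X : Type*} [AddCommGroup X] [Module BC X] (N : HNorm X) :
    N.toFun 0 = 0 := (N.eq_zero_iff 0).2 rfl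

end OpenMapHelpers

/-- Characterization of open linear maps: a surjective 𝔹ℂ-linear map T is open iff
there is a strictly positive γ ∈ 𝔻⁺ such that every y has a preimage x with
‖x‖_𝔻 ≤ γ‖y‖_𝔻. -/
theorem open_map_characterization {X Y : Type*} [AddCommGroup X] [Module BC X]
    [AddCommGroup Y] [Module BC Y]
    (NX : HNorm X) (NY : HNorm Y) (T : X → Y)
    (hlin : IsBCLinear T) (hsurj : Function.Surjective T) :
    IsOpenMapH NX NY T ↔
      ∃ γ : Hyp, (0 < γ.1 ∧ 0 < γ.2) ∧
        ∀ y : Y, ∃ x : X, T x = y ∧ dle (NX.toFun x) (γ * NY.toFun y) := by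
  constructor
  · -- forward
    intro hopen
    set U : Set X := {x | emod (NX.toFun x) < 1} with hUdef
    have hUopen : IsOpenH NX U := by
      intro x hx
      refine ⟨1 - emod (NX.toFun x), by simpa [hUdef] using hx, ?_⟩
      intro y hy
      have htri := NX.triangle (y - x) x
      rw [sub_add_cancel] at htri
      have h1 : emod (NX.toFun y) ≤ emod (NX.toFun (y - x) + NX.toFun x) :=
        emod_mono_s17 (NX.pos y) htri
      have h2 := emod_add_le (NX.toFun (y - x)) (NX.toFun x)
      simp only [HNorm.dist] at hy
      show emod (NX.toFun y) < 1
      linarith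
    have hT0 : T 0 = 0 := by
      have h : T 0 = T 0 + T 0 := by simpa using hlin.1 0 0
      exact left_eq_add.1 h
    have h0U : (0 : Y) ∈ T '' U := ⟨0, by simp [hUdef, hnorm_zero, emod_zero'], hT0⟩
    obtain ⟨δ, hδ, hball⟩ := hopen U hUopen 0 h0U
    set K := 2 * Real.sqrt 2 / δ with hKdef
    have hs2 : (0:ℝ) < Real.sqrt 2 := Real.sqrt_pos.2 (by norm_num)
    have hKpos : 0 < K := by positivity
    refine ⟨(K, K), ⟨hKpos, hKpos⟩, ?_⟩
    intro y
    set a := (NY.toFun y).1 with hadef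
    set b := (NY.toFun y).2 with hbdef
    have ha : 0 ≤ a := (NY.pos y).1
    have hb : 0 ≤ b := (NY.pos y).2
    set m : ℝ → ℝ := fun t => if t = 0 then 0 else δ / (2 * t) with hm
    set n : ℝ → ℝ := fun t => if t = 0 then 0 else 2 * t / δ with hn
    have hmnn : ∀ t : ℝ, 0 ≤ t → 0 ≤ m t := by
      intro t ht
      by_cases h : t = 0
      · simp [hm, h]
      · have : 0 < t := lt_of_le_of_ne ht (Ne.symm h)
        simp only [hm, h, if_false]
        positivity
    have hnnn : ∀ t : ℝ, 0 ≤ t → 0 ≤ n t := by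
      intro t ht
      by_cases h : t = 0
      · simp [hn, h]
      · have : 0 < t := lt_of_le_of_ne ht (Ne.symm h)
        simp only [hn, h, if_false]
        positivity
    have hmt : ∀ t : ℝ, 0 ≤ t → m t * t ≤ δ / 2 := by
      intro t ht
      by_cases h : t = 0
      · simp [hm, h]; positivity
      · simp only [hm, h, if_false]
        have ht0 : t ≠ 0 := h
        have : δ / (2 * t) * t = δ / 2 := by field_simp
        rw [this]
    set μ : BC := ((m a : ℂ), (m b : ℂ)) with hμdef
    set ν : BC := ((n a : ℂ), (n b : ℂ)) with hνdef
    have hknormμ : knorm μ = (m a, m b) := by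
      simp [knorm, hμdef, Complex.norm_real, Real.norm_eq_abs, abs_of_nonneg (hmnn a ha), abs_of_nonneg (hmnn b hb)]
    have hknormν : knorm ν = (n a, n b) := by
      simp [knorm, hνdef, Complex.norm_real, Real.norm_eq_abs, abs_of_nonneg (hnnn a ha), abs_of_nonneg (hnnn b hb)]
    have hNYy : NY.toFun y = (a, b) := rfl
    have hNμy : NY.toFun (μ • y) = (m a * a, m b * b) := by
      rw [NY.hsmul, hknormμ, hNYy, Prod.mk_mul_mk]
    have hdist : NY.dist (μ • y) 0 < δ := by
      show emod (NY.toFun (μ • y - 0)) < δ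
      rw [sub_zero, hNμy]
      have hmem : ((m a * a, m b * b) : Hyp) ∈ Dpos :=
        ⟨mul_nonneg (hmnn a ha) ha, mul_nonneg (hmnn b hb) hb⟩
      have h1 : emod ((m a * a, m b * b) : Hyp) ≤ max (m a * a) (m b * b) := emod_le_max hmem
      have h2 : max (m a * a) (m b * b) ≤ δ / 2 := max_le (hmt a ha) (hmt b hb)
      linarith
    obtain ⟨x', hx'U, hx'T⟩ := hball (μ • y) hdist
    refine ⟨ν • x', ?_, ?_⟩
    · -- T (ν • x') = y
      rw [hlin.2, hx'T]
      have hsmul2 : ν • μ • y = (ν * μ) • y := smul_smul ν μ y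
      set diff : BC := ((if a = 0 then 1 else 0 : ℂ), (if b = 0 then 1 else 0 : ℂ)) with hdiffdef
      have hνμ : ν * μ = 1 - diff := by
        have hc : ∀ t : ℝ, (n t : ℂ) * (m t : ℂ) = 1 - (if t = 0 then 1 else 0 : ℂ) := by
          intro t
          by_cases h : t = 0
          · simp [hm, hn, h]
          · simp only [hm, hn, h, if_false, sub_zero]
            rw [← Complex.ofReal_mul]
            have ht0 : t ≠ 0 := h
            have hδ0 : δ ≠ 0 := ne_of_gt hδ
            have hr : 2 * t / δ * (δ / (2 * t)) = (1:ℝ) := by field_simp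
            rw [hr, Complex.ofReal_one]
        ext
        · simpa [hνdef, hμdef, hdiffdef, Prod.fst_mul, Prod.fst_one, Prod.fst_sub] using hc a
        · simpa [hνdef, hμdef, hdiffdef, Prod.snd_mul, Prod.snd_one, Prod.snd_sub] using hc b
      have hdiffy : diff • y = 0 := by
        apply (NY.eq_zero_iff _).1
        rw [NY.hsmul, hNYy]
        have h1 : ‖(if a = 0 then 1 else 0 : ℂ)‖ * a = 0 := by
          by_cases h : a = 0 <;> simp [h]
        have h2 : ‖(if b = 0 then 1 else 0 : ℂ)‖ * b = 0 := by
          by_cases h : b = 0 <;> simp [h]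
        simp only [knorm, hdiffdef, Prod.mk_mul_mk]
        rw [h1, h2]
        rfl
      rw [hsmul2, hνμ, sub_smul, one_smul, hdiffy, sub_zero]
    · -- norm bound
      have hNx : NX.toFun (ν • x') = (n a * (NX.toFun x').1, n b * (NX.toFun x').2) := by
        rw [NX.hsmul, hknormν]
        exact Prod.mk_mul_mk ..
      have hx'emod : emod (NX.toFun x') < 1 := hx'U
      obtain ⟨hc1, hc2⟩ := comp_le_emod (NX.pos x')
      have hc1' : (NX.toFun x').1 ≤ Real.sqrt 2 := by nlinarith [emod_nonneg (NX.toFun x')]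
      have hc2' : (NX.toFun x').2 ≤ Real.sqrt 2 := by nlinarith [emod_nonneg (NX.toFun x')]
      rw [dle_iff', hNx, hNYy]
      have hbound : ∀ t : ℝ, 0 ≤ t → ∀ c : ℝ, 0 ≤ c → c ≤ Real.sqrt 2 → n t * c ≤ K * t := by
        intro t ht c hc hcs
        by_cases h : t = 0
        · simp [hn, h]
        · simp only [hn, h, if_false, hKdef]
          have htpos : 0 < t := lt_of_le_of_ne ht (Ne.symm h)
          rw [div_mul_eq_mul_div, div_mul_eq_mul_div, div_le_div_iff₀ hδ hδ]
          have h5 : t * c ≤ t * Real.sqrt 2 := mul_le_mul_of_nonneg_left hcs htpos.le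
          nlinarith [h5, hδ]
      constructor
      · show n a * (NX.toFun x').1 ≤ ((K, K) * ((a : ℝ), (b : ℝ))).1
        rw [Prod.mk_mul_mk]
        exact hbound a ha _ (NX.pos x').1 hc1'
      · show n b * (NX.toFun x').2 ≤ ((K, K) * ((a : ℝ), (b : ℝ))).2
        rw [Prod.mk_mul_mk]
        exact hbound b hb _ (NX.pos x').2 hc2'
  · -- backward
    rintro ⟨γ, ⟨hγ1, hγ2⟩, hγ⟩
    intro U hUopen y₀ hy₀
    obtain ⟨x₀, hx₀U, rfl⟩ := hy₀
    obtain ⟨ε, hε, hball⟩ := hUopen x₀ hx₀U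
    set M := max γ.1 γ.2 with hM
    have hMpos : 0 < M := lt_max_of_lt_left hγ1
    have hs2 : (0:ℝ) < Real.sqrt 2 := Real.sqrt_pos.2 (by norm_num)
    refine ⟨ε / (Real.sqrt 2 * M + 1), by positivity, ?_⟩
    intro y hy
    obtain ⟨x, hTx, hxle⟩ := hγ (y - T x₀)
    refine ⟨x₀ + x, ?_, ?_⟩
    · apply hball
      show emod (NX.toFun (x₀ + x - x₀)) < ε
      rw [add_sub_cancel_left]
      set d := NY.toFun (y - T x₀) with hd
      have hdpos := NY.pos (y - T x₀)
      have h1 : emod (NX.toFun x) ≤ emod (γ * d) := emod_mono_s17 (NX.pos x) hxle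
      have hγd : γ * d = (γ.1 * d.1, γ.2 * d.2) := rfl
      have h2 : emod (γ * d) ≤ M * (Real.sqrt 2 * emod d) := by
        obtain ⟨he1, he2⟩ := comp_le_emod hdpos
        have hmem : ((γ.1 * d.1, γ.2 * d.2) : Hyp) ∈ Dpos :=
          ⟨mul_nonneg hγ1.le hdpos.1, mul_nonneg hγ2.le hdpos.2⟩
        calc emod (γ * d) ≤ max (γ.1 * d.1) (γ.2 * d.2) := by rw [hγd]; exact emod_le_max hmem
          _ ≤ M * (Real.sqrt 2 * emod d) := by
              apply max_le
              · nlinarith [le_max_left γ.1 γ.2, hdpos.1]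
              · nlinarith [le_max_right γ.1 γ.2, hdpos.2]
      have hdist : emod d < ε / (Real.sqrt 2 * M + 1) := hy
      have hemodnn : 0 ≤ emod d := emod_nonneg d
      have hfin : M * (Real.sqrt 2 * emod d) < ε := by
        have h3 : M * (Real.sqrt 2 * emod d) ≤ (Real.sqrt 2 * M + 1) * emod d := by nlinarith
        have h4 : (Real.sqrt 2 * M + 1) * emod d < ε := by
          rw [← lt_div_iff₀' (by positivity)] at *
          calc emod d < ε / (Real.sqrt 2 * M + 1) := hdist
            _ = _ := rfl
        linarith
      linarith
    · rw [hlin.1, hTx]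
      abel
end
end
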